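/- Let p be a Lebesgue density with a gap of size ε at level λ_*: for S = {x : p(x) ≥ λ* } with λ* = λ_* + ε, we have inf_{x ∈ S} p(x) ≥ λ* and sup_{x ∉ S} p(x) ≤ λ_*. Let p̂_h be the spherical-kernel density estimator from an i.i.d. sample X₁,…,Xₙ and suppose sup_x |p̂_h(x) − p_h(x)| ≤ aₙ with ε > 2aₙ, where p_h(x) = P(B(x,h))/(h^d V_d). Then for any λ ∈ (λ_* + aₙ, λ* − aₙ), the set D̂_h(λ) = {X_i : p̂_h(X_i) ≥ λ} satisfies S_{−h} ∩ {X₁,…,Xₙ} ⊆ D̂_h(λ) ⊆ S_h. -/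

import Mathlib

open Metric Set MeasureTheory

/-- Volume of the unit ball in `ℝ^d`. -/
noncomputable def Vd (d : ℕ) : ℝ :=
  (volume (closedBall (0 : EuclideanSpace ℝ (Fin d)) 1)).toReal

open Classical in
/-- The spherical-kernel (DBSCAN) density estimator based on the sample `X`. -/
noncomputable def sphKDE (d n : ℕ) (X : Fin n → EuclideanSpace ℝ (Fin d)) (h : ℝ)
    (x : EuclideanSpace ℝ (Fin d)) : ℝ :=
  ((Finset.univ.filter fun i => X i ∈ closedBall x h).card : ℝ) / (n * h ^ d * Vd d)

/-- The expectation `p_h(x) = P(B(x,h))/(h^d V_d)` of the spherical KDE. -/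
noncomputable def smoothed (d : ℕ) (p : EuclideanSpace ℝ (Fin d) → ℝ) (h : ℝ)
    (x : EuclideanSpace ℝ (Fin d)) : ℝ :=
  (∫ z in closedBall x h, p z) / (h ^ d * Vd d)

/-- The closed `h`-enlargement of a set. -/
def enl {X : Type*} [PseudoMetricSpace X] (B : Set X) (h : ℝ) : Set X :=
  ⋃ x ∈ B, Metric.closedBall x h

/-- The `h`-erosion of a set. -/
def ero {X : Type*} [PseudoMetricSpace X] (B : Set X) (h : ℝ) : Set X :=
  {x ∈ B | Metric.closedBall x h ⊆ B}


/-! The estimator is within `an` of `p_h`, and the gap pins `p_h` down on both sides: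
`p_h ≥ λ*` on the erosion `S_{-h}`, since there the whole ball lies in `S`, and `p_h ≤ λ_*` off
the enlargement `S_h`, since there the ball misses `S`. Hence `p̂_h ≥ λ* - an > λ` on `S_{-h}` and
`p̂_h ≤ λ_* + an < λ` off `S_h`. -/

lemma Vd_pos (d : ℕ) : 0 < Vd d :=
  ENNReal.toReal_pos (measure_closedBall_pos _ _ one_pos).ne' measure_closedBall_lt_top.ne

section Smoothed

variable {d : ℕ} {p f g : EuclideanSpace ℝ (Fin d) → ℝ} {x : EuclideanSpace ℝ (Fin d)} {h c : ℝ}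

lemma volume_real_closedBall (x : EuclideanSpace ℝ (Fin d)) (hh : 0 ≤ h) :
    volume.real (closedBall x h) = h ^ d * Vd d := by
  rw [measureReal_def, Measure.addHaar_closedBall' _ _ hh, finrank_euclideanSpace,
    Fintype.card_fin, ENNReal.toReal_mul, ENNReal.toReal_ofReal (by positivity), Vd]

lemma smoothed_const (c : ℝ) (x : EuclideanSpace ℝ (Fin d)) (hh : 0 < h) :
    smoothed d (fun _ => c) h x = c := by
  have hpos : 0 < h ^ d * Vd d := mul_pos (pow_pos hh d) (Vd_pos d)
  rw [smoothed, setIntegral_const, volume_real_closedBall x hh.le, smul_eq_mul,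
    mul_div_cancel_left₀ _ hpos.ne']

lemma smoothed_mono_on (hh : 0 ≤ h) (hf : IntegrableOn f (closedBall x h))
    (hg : IntegrableOn g (closedBall x h)) (hfg : ∀ z ∈ closedBall x h, f z ≤ g z) :
    smoothed d f h x ≤ smoothed d g h x :=
  div_le_div_of_nonneg_right (setIntegral_mono_on hf hg measurableSet_closedBall hfg)
    (mul_nonneg (pow_nonneg hh d) (Vd_pos d).le)

lemma le_smoothed_of_forall_le (hh : 0 < h) (hp : IntegrableOn p (closedBall x h))
    (hc : ∀ z ∈ closedBall x h, c ≤ p z) : c ≤ smoothed d p h x := by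
  simpa only [smoothed_const c x hh] using
    smoothed_mono_on hh.le (integrableOn_const measure_closedBall_lt_top.ne) hp hc

lemma smoothed_le_of_forall_le (hh : 0 < h) (hp : IntegrableOn p (closedBall x h))
    (hc : ∀ z ∈ closedBall x h, p z ≤ c) : smoothed d p h x ≤ c := by
  simpa only [smoothed_const c x hh] using
    smoothed_mono_on hh.le hp (integrableOn_const measure_closedBall_lt_top.ne) hc

end Smoothed

lemma notMem_of_mem_closedBall_of_notMem_enl {Y : Type*} [PseudoMetricSpace Y] {B : Set Y}
    {x z : Y} {h : ℝ} (hx : x ∉ enl B h) (hz : z ∈ closedBall x h) : z ∉ B :=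
  fun hzB => hx (mem_biUnion hzB (mem_closedBall_comm.mp hz))

theorem stmt11_general (d n : ℕ) (p : EuclideanSpace ℝ (Fin d) → ℝ)
    (hone : ∫ x, p x = 1)
    (lstar ε : ℝ)
    -- gap of size ε at level lstar: S = {p ≥ lstar + ε} and p ≤ lstar off S
    (hgap : ∀ x, p x < lstar + ε → p x ≤ lstar)
    (X : Fin n → EuclideanSpace ℝ (Fin d)) (h : ℝ) (hh : 0 < h)
    (an : ℝ)
    (hclose : ∀ x, |sphKDE d n X h x - smoothed d p h x| ≤ an)
    (l : ℝ) (hl : l ∈ Set.Ioo (lstar + an) (lstar + ε - an)) :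
    (∀ i : Fin n, X i ∈ ero {x | lstar + ε ≤ p x} h → l ≤ sphKDE d n X h (X i)) ∧
    (∀ i : Fin n, l ≤ sphKDE d n X h (X i) → X i ∈ enl {x | lstar + ε ≤ p x} h) := by
  have hp : Integrable p := Integrable.of_integral_ne_zero (hone ▸ one_ne_zero)
  refine ⟨fun i hi => ?_, fun i hli => ?_⟩
  · have hS : lstar + ε ≤ smoothed d p h (X i) :=
      le_smoothed_of_forall_le hh hp.integrableOn fun z hz => hi.2 hz
    linarith [(abs_le.mp (hclose (X i))).1, hl.2]
  · by_contra hX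
    have hS : smoothed d p h (X i) ≤ lstar :=
      smoothed_le_of_forall_le hh hp.integrableOn fun z hz =>
        hgap z <| not_le.mp <|
          notMem_of_mem_closedBall_of_notMem_enl (B := {x | lstar + ε ≤ p x}) hX hz
    linarith [(abs_le.mp (hclose (X i))).2, hl.1]

theorem stmt11 (d n : ℕ) (p : EuclideanSpace ℝ (Fin d) → ℝ)
    (hmeas : Measurable p) (hp0 : ∀ x, 0 ≤ p x) (hone : ∫ x, p x = 1)
    (lstar ε : ℝ) (hε : 0 < ε)
    -- gap of size ε at level lstar: S = {p ≥ lstar + ε} and p ≤ lstar off S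
    (hgap : ∀ x, p x < lstar + ε → p x ≤ lstar)
    (X : Fin n → EuclideanSpace ℝ (Fin d)) (h : ℝ) (hh : 0 < h)
    (an : ℝ) (han : 0 ≤ an) (hεan : 2 * an < ε)
    (hclose : ∀ x, |sphKDE d n X h x - smoothed d p h x| ≤ an)
    (l : ℝ) (hl : l ∈ Set.Ioo (lstar + an) (lstar + ε - an)) :
    (∀ i : Fin n, X i ∈ ero {x | lstar + ε ≤ p x} h → l ≤ sphKDE d n X h (X i)) ∧
    (∀ i : Fin n, l ≤ sphKDE d n X h (X i) → X i ∈ enl {x | lstar + ε ≤ p x} h) :=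
  stmt11_general d n p hone lstar ε hgap X h hh an hclose l hl
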